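/- Let m ≥ 1, let w : Fin m → Fin m → ℝ be symmetric with w s s̄ ≥ 0 for s ≠ s̄, suppose the graph on Fin m with an edge between s ≠ s̄ whenever w s s̄ > 0 is connected, and let L be the weighted graph Laplacian of w. Let α > 0 satisfy α · (∑_{s̄ ≠ s} w s s̄) < 1 for every s ∈ Fin m, and set M = 1 − α • L. Then for every x : Fin m → ℝ, the iterates M^k.mulVec x converge, as k → ∞, to the consensus vector whose every component equals the average (1/m) · ∑_s x s. -/

import Mathlib

/-!
`M = 1 - α L` is symmetric, and Gershgorin's theorem puts its eigenvalues in `(-1, 1]`: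
row `s` of `M` has diagonal entry `1 - α dₛ` and off-diagonal absolute sum `α dₛ < 1`.
Diagonalising, `M ^ k` converges to a matrix `P` with `M P = P`, so the limit `P x` lies in
the kernel of `L`. The identity `⟪v, L v⟫ = ½ ∑ₛ ∑ₜ w s t (v s - v t)²` shows that kernel
vectors are constant along edges, hence constant on the connected graph. The columns of `M`
sum to `1`, so `∑ₛ (M ^ k x) s = ∑ₛ x s` for all `k`, which identifies the constant as the
average.
-/

open Finset Filter Matrix Topology

theorem tendsto_pow_atTop_of_mem_Ioc {t : ℝ} (ht : t ∈ Set.Ioc (-1) 1) :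
    Tendsto (fun k : ℕ => t ^ k) atTop (𝓝 (if t = 1 then 1 else 0)) := by
  split_ifs with h
  · simp [h]
  · exact tendsto_pow_atTop_nhds_zero_of_abs_lt_one
      (abs_lt.mpr ⟨ht.1, lt_of_le_of_ne ht.2 h⟩)

theorem mul_eq_of_tendsto_pow {R : Type*} [Monoid R] [TopologicalSpace R] [ContinuousMul R]
    [T2Space R] {a p : R} (h : Tendsto (fun k : ℕ => a ^ k) atTop (𝓝 p)) : a * p = p := by
  refine tendsto_nhds_unique ?_ ((tendsto_add_atTop_iff_nat 1).mpr h)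
  simpa only [pow_succ'] using h.const_mul a

namespace Matrix

variable {n : Type*} [Fintype n] [DecidableEq n]

theorem IsHermitian.exists_tendsto_pow {𝕜 : Type*} [RCLike 𝕜] {A : Matrix n n 𝕜}
    (hA : A.IsHermitian) (h : ∀ i, hA.eigenvalues i ∈ Set.Ioc (-1) 1) :
    ∃ P, Tendsto (fun k : ℕ => A ^ k) atTop (𝓝 P) := by
  set U := hA.eigenvectorUnitary
  have hpow : ∀ k : ℕ,
      A ^ k = U * diagonal (fun i => (hA.eigenvalues i ^ k : 𝕜)) * star U := by
    intro k
    conv_lhs => rw [hA.spectral_theorem]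
    rw [← map_pow, diagonal_pow, Unitary.conjStarAlgAut_apply]
    rfl
  have hdiag : ∀ i, Tendsto (fun k : ℕ => (hA.eigenvalues i ^ k : 𝕜)) atTop
      (𝓝 ((if hA.eigenvalues i = 1 then 1 else 0 : ℝ) : 𝕜)) := fun i => by
    simpa only [Function.comp_def, RCLike.ofReal_pow] using
      ((RCLike.continuous_ofReal (K := 𝕜)).tendsto _).comp (tendsto_pow_atTop_of_mem_Ioc (h i))
  simp only [hpow]
  exact ⟨_, (((continuous_const.mul continuous_id).mul continuous_const).tendsto _).comp
    ((continuous_id.matrix_diagonal.tendsto _).comp (tendsto_pi_nhds.mpr hdiag))⟩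

theorem vecMul_eq_of_tendsto_pow {R : Type*} [Semiring R] [TopologicalSpace R]
    [ContinuousAdd R] [ContinuousMul R] [T2Space R] {A P : Matrix n n R} {v : n → R}
    (hv : v ᵥ* A = v) (hP : Tendsto (fun k : ℕ => A ^ k) atTop (𝓝 P)) : v ᵥ* P = v := by
  have hpow : ∀ k : ℕ, v ᵥ* A ^ k = v := by
    intro k
    induction k with
    | zero => simp
    | succ k ih => rw [pow_succ, ← vecMul_vecMul, ih, hv]
  have hlim : Tendsto (fun k : ℕ => v ᵥ* A ^ k) atTop (𝓝 (v ᵥ* P)) :=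
    ((continuous_const.matrix_vecMul continuous_id).tendsto P).comp hP
  simp only [hpow] at hlim
  exact tendsto_nhds_unique hlim tendsto_const_nhds

theorem mem_Ioc_of_hasEigenvalue {A : Matrix n n ℝ} {μ : ℝ}
    (hμ : Module.End.HasEigenvalue (toLin' A) μ)
    (hupper : ∀ k, A k k + ∑ j ∈ univ.erase k, |A k j| ≤ 1)
    (hlower : ∀ k, -1 < A k k - ∑ j ∈ univ.erase k, |A k j|) : μ ∈ Set.Ioc (-1) 1 := by
  obtain ⟨k, hk⟩ := eigenvalue_mem_ball hμ
  rw [Metric.mem_closedBall, Real.dist_eq, abs_le] at hk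
  simp only [Real.norm_eq_abs] at hk
  constructor <;> linarith [hupper k, hlower k]

end Matrix

theorem SimpleGraph.Preconnected.eq_of_forall_adj {V α : Type*} {G : SimpleGraph V}
    (hG : G.Preconnected) {f : V → α} (hf : ∀ a b, G.Adj a b → f a = f b) (a b : V) :
    f a = f b := by
  obtain ⟨p⟩ := hG a b
  induction p with
  | nil => rfl
  | cons hadj _ ih => exact (hf _ _ hadj).trans ih

section WeightedLaplacian

variable {V : Type*} [Fintype V] [DecidableEq V] (w : V → V → ℝ)

def weightedDegree (s : V) : ℝ := ∑ t ∈ ({s}ᶜ : Finset V), w s t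

def weightedLaplacian : Matrix V V ℝ :=
  Matrix.of fun s t => if s = t then weightedDegree w s else -w s t

variable {w}

theorem eq_weightedLaplacian {L : Matrix V V ℝ} (hdiag : ∀ s, L s s = weightedDegree w s)
    (hoff : ∀ s t, s ≠ t → L s t = -w s t) : L = weightedLaplacian w := by
  ext s t
  by_cases h : s = t
  · subst h; simp [weightedLaplacian, hdiag]
  · simp [weightedLaplacian, h, hoff s t h]

theorem weightedLaplacian_mulVec_apply (v : V → ℝ) (s : V) :
    (weightedLaplacian w *ᵥ v) s = ∑ t, w s t * (v s - v t) := by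
  rw [mulVec, dotProduct, Fintype.sum_eq_add_sum_compl s, Fintype.sum_eq_add_sum_compl s]
  simp only [weightedLaplacian, weightedDegree, of_apply, if_true, sub_self, mul_zero, zero_add,
    Finset.sum_mul, ← Finset.sum_add_distrib]
  refine Finset.sum_congr rfl fun t ht => ?_
  have hst : s ≠ t := fun h => by simp [h] at ht
  rw [if_neg hst]
  ring

theorem weightedLaplacian_isSymm (hw : ∀ s t, w s t = w t s) : (weightedLaplacian w).IsSymm :=
  IsSymm.ext fun s t => by
    by_cases h : s = t
    · rw [h]
    · simp [weightedLaplacian, h, Ne.symm h, hw s t]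

theorem one_vecMul_weightedLaplacian (hw : ∀ s t, w s t = w t s) :
    1 ᵥ* weightedLaplacian w = 0 := by
  rw [← (weightedLaplacian_isSymm hw).eq, vecMul_transpose]
  ext s
  simp [weightedLaplacian_mulVec_apply]

theorem dotProduct_weightedLaplacian_mulVec (hw : ∀ s t, w s t = w t s) (v : V → ℝ) :
    v ⬝ᵥ (weightedLaplacian w *ᵥ v) = (∑ s, ∑ t, w s t * (v s - v t) ^ 2) / 2 := by
  have hswap : ∑ s, ∑ t, v s * (w s t * (v s - v t)) =
      ∑ s, ∑ t, v t * (w s t * (v t - v s)) := by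
    rw [Finset.sum_comm]
    exact Finset.sum_congr rfl fun s _ => Finset.sum_congr rfl fun t _ => by rw [hw]
  simp only [dotProduct, weightedLaplacian_mulVec_apply, Finset.mul_sum]
  rw [eq_div_iff two_ne_zero, mul_two]
  nth_rewrite 2 [hswap]
  simp only [← Finset.sum_add_distrib]
  refine Finset.sum_congr rfl fun s _ => Finset.sum_congr rfl fun t _ => ?_
  ring

theorem forall_eq_of_weightedLaplacian_mulVec_eq_zero (hw : ∀ s t, w s t = w t s)
    (hw_nonneg : ∀ s t, s ≠ t → 0 ≤ w s t)
    (hconn : (SimpleGraph.fromRel fun s t => 0 < w s t).Connected) {v : V → ℝ}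
    (hv : weightedLaplacian w *ᵥ v = 0) (s t : V) : v s = v t := by
  have hterm_nonneg : ∀ s t, 0 ≤ w s t * (v s - v t) ^ 2 := fun s t => by
    by_cases h : s = t
    · simp [h]
    · exact mul_nonneg (hw_nonneg s t h) (sq_nonneg _)
  have hsum : ∑ s, ∑ t, w s t * (v s - v t) ^ 2 = 0 := by
    have := dotProduct_weightedLaplacian_mulVec hw v
    rw [hv, dotProduct_zero] at this
    linarith
  have hterm : ∀ s t, w s t * (v s - v t) ^ 2 = 0 := fun s t =>
    (Finset.sum_eq_zero_iff_of_nonneg fun t _ => hterm_nonneg s t).mp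
      ((Finset.sum_eq_zero_iff_of_nonneg fun s _ =>
        Finset.sum_nonneg fun t _ => hterm_nonneg s t).mp hsum s (mem_univ s)) t (mem_univ t)
  refine hconn.preconnected.eq_of_forall_adj (fun a b hab => ?_) s t
  have hpos : 0 < w a b := by
    rcases (SimpleGraph.fromRel_adj _ a b).mp hab with ⟨-, h | h⟩
    · exact h
    · rwa [hw]
  have := hterm a b
  rw [mul_eq_zero, or_iff_right hpos.ne', sq_eq_zero_iff, sub_eq_zero] at this
  exact this

theorem mem_Ioc_of_hasEigenvalue_one_sub_smul_weightedLaplacian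
    (hw_nonneg : ∀ s t, s ≠ t → 0 ≤ w s t) {α : ℝ} (hα : 0 ≤ α)
    (hαw : ∀ s, α * weightedDegree w s < 1) {μ : ℝ}
    (hμ : Module.End.HasEigenvalue (toLin' (1 - α • weightedLaplacian w)) μ) :
    μ ∈ Set.Ioc (-1) 1 := by
  have hradius : ∀ s, ∑ t ∈ univ.erase s, |(1 - α • weightedLaplacian w) s t| =
      α * weightedDegree w s := fun s => by
    rw [weightedDegree, ← compl_singleton, Finset.mul_sum]
    refine Finset.sum_congr rfl fun t ht => ?_
    have hst : s ≠ t := fun h => by simp [h] at ht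
    simp [weightedLaplacian, hst, abs_of_nonneg (mul_nonneg hα (hw_nonneg s t hst))]
  have hdiag : ∀ s, (1 - α • weightedLaplacian w) s s = 1 - α * weightedDegree w s :=
    fun s => by simp [weightedLaplacian]
  refine mem_Ioc_of_hasEigenvalue hμ (fun s => ?_) (fun s => ?_) <;>
    · rw [hradius, hdiag]
      linarith [hαw s]

end WeightedLaplacian

theorem apply_eq_average_of_forall_eq {V : Type*} [Fintype V] {l : V → ℝ}
    (hl : ∀ s t, l s = l t) (s : V) : l s = 1 / Fintype.card V * ∑ t, l t := by
  have hcard : (Fintype.card V : ℝ) ≠ 0 :=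
    Nat.cast_ne_zero.mpr (Fintype.card_pos_iff.mpr ⟨s⟩).ne'
  rw [Finset.sum_congr rfl fun t _ => hl t s, sum_const, card_univ, nsmul_eq_mul]
  field_simp

theorem perturbed_identity_powers_reach_consensus_general
    (m : ℕ)
    (w : Fin m → Fin m → ℝ)
    (hw_symm : ∀ s t, w s t = w t s)
    (hw_nonneg : ∀ s t, s ≠ t → 0 ≤ w s t)
    (hw_conn : (SimpleGraph.fromRel (fun s t => 0 < w s t)).Connected)
    (L : Matrix (Fin m) (Fin m) ℝ)
    (hL_diag : ∀ s, L s s = ∑ t ∈ ({s}ᶜ : Finset (Fin m)), w s t)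
    (hL_off : ∀ s t, s ≠ t → L s t = -(w s t))
    (α : ℝ) (hα : 0 < α)
    (hαw : ∀ s, α * ∑ t ∈ ({s}ᶜ : Finset (Fin m)), w s t < 1) :
    ∀ x : Fin m → ℝ,
      Tendsto
        (fun k : ℕ => (((1 : Matrix (Fin m) (Fin m) ℝ) - α • L) ^ k).mulVec x)
        atTop
        (nhds (fun _ => (1 / (m : ℝ)) * ∑ s, x s)) := by
  intro x
  rw [eq_weightedLaplacian hL_diag hL_off]
  set M := 1 - α • weightedLaplacian w
  have hM : M.IsHermitian := isHermitian_iff_isSymm.mpr <|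
    isSymm_one.sub ((weightedLaplacian_isSymm hw_symm).smul α)
  obtain ⟨P, hP⟩ := hM.exists_tendsto_pow fun i =>
    mem_Ioc_of_hasEigenvalue_one_sub_smul_weightedLaplacian hw_nonneg hα.le hαw <|
      Module.End.hasEigenvalue_iff_mem_spectrum.mpr <| by
        simpa only [spectrum_toLin'] using hM.eigenvalues_mem_spectrum_real i
  have hlim : Tendsto (fun k : ℕ => (M ^ k) *ᵥ x) atTop (𝓝 (P *ᵥ x)) :=
    ((continuous_id.matrix_mulVec continuous_const).tendsto P).comp hP
  have hker : weightedLaplacian w *ᵥ (P *ᵥ x) = 0 := by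
    have hfix : M *ᵥ (P *ᵥ x) = P *ᵥ x := by rw [mulVec_mulVec, mul_eq_of_tendsto_pow hP]
    rw [sub_mulVec, one_mulVec, smul_mulVec, sub_eq_self, smul_eq_zero] at hfix
    exact hfix.resolve_left hα.ne'
  have hsum : ∑ s, (P *ᵥ x) s = ∑ s, x s := by
    have hM_col : 1 ᵥ* M = 1 := by
      rw [vecMul_sub, vecMul_one, vecMul_smul, one_vecMul_weightedLaplacian hw_symm, smul_zero,
        sub_zero]
    rw [← one_dotProduct, dotProduct_mulVec, vecMul_eq_of_tendsto_pow hM_col hP, one_dotProduct]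
  convert hlim using 2
  funext s
  rw [apply_eq_average_of_forall_eq
    (forall_eq_of_weightedLaplacian_mulVec_eq_zero hw_symm hw_nonneg hw_conn hker) s, hsum,
    Fintype.card_fin]

/-- For a connected weighted graph with `α · (∑_{t ≠ s} w s t) < 1` for every
`s`, the iterates `M^k x` of `M = 1 − α • L` converge to the consensus vector
whose components all equal the average of the components of `x`. -/
theorem perturbed_identity_powers_reach_consensus
    (m : ℕ) (hm : 1 ≤ m)
    (w : Fin m → Fin m → ℝ)
    (hw_symm : ∀ s t, w s t = w t s)
    (hw_nonneg : ∀ s t, s ≠ t → 0 ≤ w s t)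
    (hw_conn : (SimpleGraph.fromRel (fun s t => 0 < w s t)).Connected)
    (L : Matrix (Fin m) (Fin m) ℝ)
    (hL_diag : ∀ s, L s s = ∑ t ∈ ({s}ᶜ : Finset (Fin m)), w s t)
    (hL_off : ∀ s t, s ≠ t → L s t = -(w s t))
    (α : ℝ) (hα : 0 < α)
    (hαw : ∀ s, α * ∑ t ∈ ({s}ᶜ : Finset (Fin m)), w s t < 1) :
    ∀ x : Fin m → ℝ,
      Tendsto
        (fun k : ℕ => (((1 : Matrix (Fin m) (Fin m) ℝ) - α • L) ^ k).mulVec x)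
        atTop
        (nhds (fun _ => (1 / (m : ℝ)) * ∑ s, x s)) :=
  perturbed_identity_powers_reach_consensus_general m w hw_symm hw_nonneg hw_conn L hL_diag hL_off α
    hα hαw
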